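/- arXiv:1207.1893 — 2 statements merged into one kernel-verified Lean document; each statement's English description precedes it below -/
import Mathlib

section
/- (Robust minimal dwell-time.) Let T > 0 and let A₁, …, A_{N_A} and J₁, …, J_{N_J} be real n×n matrices. Suppose there exist a real symmetric positive definite n×n matrix P and, for each j = 1, …, N_J, real symmetric positive definite n×n matrices Zⱼ, real symmetric n×n matrices Qⱼ and Uⱼ, real n×n matrices Rⱼ, and real n×2n matrices Nⱼ such that Ψᵢⱼ(T), Φᵢⱼ(T), and AᵢᵀP + PAᵢ are all negative definite for all i = 1, …, N_A and all j = 1, …, N_J. Then ℐ(P,A,J,θ) is negative definite for every θ ≥ T, every A in the convex hull of {A₁, …, A_{N_A}}, and every J in the convex hull of {J₁, …, J_{N_J}}; consequently, for every sequence (T_k)_{k∈ℕ} with T_k ≥ T and every such pair (A, J), the sequence x_{k+1} = exp(T_k·A)·J·x_k tends to 0 for every initial vector x₀. -/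
open Matrix Filter

/-- Matrix exponential of a real square matrix. -/
noncomputable def mexp {n : ℕ} (A : Matrix (Fin n) (Fin n) ℝ) : Matrix (Fin n) (Fin n) ℝ :=
  NormedSpace.exp A

/-- ℐ(P,A,J,T) := Jᵀ·exp(T·Aᵀ)·P·exp(T·A)·J − P. -/
noncomputable def scrI {n : ℕ} (P A J : Matrix (Fin n) (Fin n) ℝ) (T : ℝ) :
    Matrix (Fin n) (Fin n) ℝ :=
  Jᵀ * mexp (T • Aᵀ) * P * mexp (T • A) * J - P

/-- xᵀMx < 0 for all x ≠ 0. -/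
def negDef {m : Type*} [Fintype m] (M : Matrix m m ℝ) : Prop :=
  ∀ x : m → ℝ, x ≠ 0 → x ⬝ᵥ M.mulVec x < 0

/-- xᵀMx > 0 for all x ≠ 0. -/
def posDef {m : Type*} [Fintype m] (M : Matrix m m ℝ) : Prop :=
  ∀ x : m → ℝ, x ≠ 0 → 0 < x ⬝ᵥ M.mulVec x

/-- xᵀMx ≥ 0 for all x. -/
def posSemidef {m : Type*} [Fintype m] (M : Matrix m m ℝ) : Prop :=
  ∀ x : m → ℝ, 0 ≤ x ⬝ᵥ M.mulVec x

/-- The n×2n block matrix `[I 0]`. -/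
def Mxb (n : ℕ) : Matrix (Fin n) (Fin n ⊕ Fin n) ℝ := Matrix.fromCols 1 0

/-- The n×2n block matrix `[0 I]`. -/
def Mmb (n : ℕ) : Matrix (Fin n) (Fin n ⊕ Fin n) ℝ := Matrix.fromCols 0 1

/-- The n×2n block matrix `[I −J]`. -/
def Mzb {n : ℕ} (J : Matrix (Fin n) (Fin n) ℝ) : Matrix (Fin n) (Fin n ⊕ Fin n) ℝ :=
  Matrix.fromCols 1 (-J)

/-- He[X] := X + Xᵀ. -/
def He {m : Type*} (X : Matrix m m ℝ) : Matrix m m ℝ := X + Xᵀ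

/-- The 2n×2n matrix `G⁰ᵢⱼ`. -/
def G0 {n : ℕ} (T : ℝ) (Ai Jj P Qj Rj : Matrix (Fin n) (Fin n) ℝ)
    (Nj : Matrix (Fin n) (Fin n ⊕ Fin n) ℝ) :
    Matrix (Fin n ⊕ Fin n) (Fin n ⊕ Fin n) ℝ :=
  T • He ((Mxb n)ᵀ * Aiᵀ * P * Mxb n) - (Mzb Jj)ᵀ * Qj * Mzb Jj
    + (Mmb n)ᵀ * (Jjᵀ * P * Jj - P) * Mmb n
    + He (Njᵀ * Mzb Jj - (Mzb Jj)ᵀ * Rj * Mxb n)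

/-- The 2n×2n matrix `G¹ᵢⱼ`. -/
def G1 {n : ℕ} (Ai Jj Qj Rj : Matrix (Fin n) (Fin n) ℝ) :
    Matrix (Fin n ⊕ Fin n) (Fin n ⊕ Fin n) ℝ :=
  He ((Mxb n)ᵀ * Aiᵀ * Qj * Mzb Jj + (Mxb n)ᵀ * Aiᵀ * Rj * Mxb n
    + (Mzb Jj)ᵀ * Rj * Ai * Mxb n)

/-- The 2n×2n matrix `G²ⱼ`. -/
def G2 {n : ℕ} (Jj Uj : Matrix (Fin n) (Fin n) ℝ) :
    Matrix (Fin n ⊕ Fin n) (Fin n ⊕ Fin n) ℝ :=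
  (Mmb n)ᵀ * Jjᵀ * Uj * Jj * Mmb n

/-- The 3n×3n block matrix `Ψᵢⱼ(T)`. -/
noncomputable def PsiR {n : ℕ} (T : ℝ) (Ai Jj P Zj Qj Uj Rj : Matrix (Fin n) (Fin n) ℝ)
    (Nj : Matrix (Fin n) (Fin n ⊕ Fin n) ℝ) :
    Matrix ((Fin n ⊕ Fin n) ⊕ Fin n) ((Fin n ⊕ Fin n) ⊕ Fin n) ℝ :=
  Matrix.fromBlocks (G0 T Ai Jj P Qj Rj Nj + T • (G1 Ai Jj Qj Rj + G2 Jj Uj))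
    ((Mxb n)ᵀ * Aiᵀ * Zj) (Zj * Ai * Mxb n) (-(T⁻¹ • Zj))

/-- The 3n×3n block matrix `Φᵢⱼ(T)`. -/
noncomputable def PhiR {n : ℕ} (T : ℝ) (Ai Jj P Zj Qj Uj Rj : Matrix (Fin n) (Fin n) ℝ)
    (Nj : Matrix (Fin n) (Fin n ⊕ Fin n) ℝ) :
    Matrix ((Fin n ⊕ Fin n) ⊕ Fin n) ((Fin n ⊕ Fin n) ⊕ Fin n) ℝ :=
  Matrix.fromBlocks (G0 T Ai Jj P Qj Rj Nj - T • G2 Jj Uj) Njᵀ Nj (-(T⁻¹ • Zj))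

/-!
Fix one vertex pair `(A, J)` and `y ≠ 0`, and let `x s = exp (s A) J y`. The looped functional
`Θ` below vanishes at `s = 0` and equals `T (x(T)ᵀ P x(T) - yᵀ P y)` at `s = T`. Testing `Ψ`
against `(x, y, T ẋ)` and `Φ` against `(x, y, T Z⁻¹ N (x, y))` gives
`T Θ'(s) = (T - s) · (Ψ-form) + s · (Φ-form) - T ∫₀ˢ (ẋ + u)ᵀ Z (ẋ + u)` with `u = Z⁻¹ N (x, y)`,
so `Θ` strictly decreases on `[0, T]` and `ℐ(P,A,J,T) ≺ 0`.

The quadratic forms of `Ψ`, `Φ` and `AᵀP + PA` are affine in `A`, so the vertex conditions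
pass to the convex hull in `A`; the quadratic form of `ℐ` is convex in `J`, and it is
nonincreasing in `θ` because `AᵀP + PA ≼ 0` makes `xᵀ P x` nonincreasing along the flow.
Along the impulsive trajectory `V = xᵀ P x` then drops by at least `c ‖x_k‖²` at each step,
so `∑ ‖x_k‖² < ∞` and `x_k → 0`.
-/

namespace RobustDwellTime

section QuadraticForm

variable {m k ι : Type*} [Fintype m] [Fintype k] [Fintype ι]

lemma quadForm_He (X : Matrix m m ℝ) (x : m → ℝ) : x ⬝ᵥ He X *ᵥ x = 2 * (x ⬝ᵥ X *ᵥ x) := by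
  rw [He, add_mulVec, dotProduct_add, dotProduct_transpose_mulVec]
  ring

lemma dotProduct_transpose_mulVec' (M : Matrix k m ℝ) (x : m → ℝ) (y : k → ℝ) :
    x ⬝ᵥ Mᵀ *ᵥ y = M *ᵥ x ⬝ᵥ y := by
  rw [dotProduct_transpose_mulVec, dotProduct_comm]

lemma _root_.Matrix.IsSymm.dotProduct_mulVec_comm {M : Matrix m m ℝ} (hM : M.IsSymm)
    (x y : m → ℝ) : x ⬝ᵥ M *ᵥ y = y ⬝ᵥ M *ᵥ x := by
  rw [← dotProduct_transpose_mulVec, hM.eq]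

lemma continuous_quadForm (M : Matrix m m ℝ) : Continuous fun x : m → ℝ => x ⬝ᵥ M *ᵥ x := by
  simp only [dotProduct, mulVec]
  fun_prop

lemma mulVec_surjective_of_posDef [DecidableEq m] {M : Matrix m m ℝ} (hM : posDef M) :
    Function.Surjective M.mulVec := by
  rw [mulVec_surjective_iff_isUnit, ← mulVec_injective_iff_isUnit]
  intro u v huv
  by_contra hne
  have := hM (u - v) (sub_ne_zero.2 hne)
  rw [mulVec_sub, huv, sub_self, dotProduct_zero] at this
  exact this.false

lemma quadForm_nonneg_of_posDef {M : Matrix m m ℝ} (hM : posDef M) (x : m → ℝ) :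
    0 ≤ x ⬝ᵥ M *ᵥ x := by
  rcases eq_or_ne x 0 with rfl | hx
  · simp
  · exact (hM x hx).le

lemma quadForm_nonpos_of_negDef {M : Matrix m m ℝ} (hM : negDef M) (x : m → ℝ) :
    x ⬝ᵥ M *ᵥ x ≤ 0 := by
  rcases eq_or_ne x 0 with rfl | hx
  · simp
  · exact (hM x hx).le

lemma quadForm_fromBlocks (G : Matrix m m ℝ) (B : Matrix m k ℝ) (C : Matrix k m ℝ)
    (D : Matrix k k ℝ) (ξ : m → ℝ) (z : k → ℝ) :
    Sum.elim ξ z ⬝ᵥ fromBlocks G B C D *ᵥ Sum.elim ξ z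
      = ξ ⬝ᵥ G *ᵥ ξ + ξ ⬝ᵥ B *ᵥ z + z ⬝ᵥ C *ᵥ ξ + z ⬝ᵥ D *ᵥ z := by
  simp only [fromBlocks_mulVec, Sum.elim_comp_inl, Sum.elim_comp_inr,
    sumElim_dotProduct_sumElim, dotProduct_add]
  ring

lemma sum_mul_lt_zero_of_convexComb {la q : ι → ℝ} (hla : ∀ i, 0 ≤ la i) (hla1 : ∑ i, la i = 1)
    (hq : ∀ i, q i < 0) : ∑ i, la i * q i < 0 := by
  obtain ⟨i, hi⟩ : ∃ i, 0 < la i := by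
    by_contra! h
    have : ∑ i, la i = 0 := Finset.sum_eq_zero fun i _ => le_antisymm (h i) (hla i)
    linarith
  calc ∑ i, la i * q i < ∑ _i : ι, (0 : ℝ) :=
        Finset.sum_lt_sum (fun j _ => mul_nonpos_of_nonneg_of_nonpos (hla j) (hq j).le)
          ⟨i, Finset.mem_univ _, mul_neg_of_pos_of_neg hi (hq i)⟩
    _ = 0 := Finset.sum_const_zero

lemma negDef_convexComb_of_affine {F : Matrix m m ℝ → Matrix k k ℝ}
    (hF : ∀ ρ : k → ℝ, ∃ (c : ℝ) (a e : m → ℝ), ∀ A, ρ ⬝ᵥ F A *ᵥ ρ = c + A *ᵥ a ⬝ᵥ e)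
    {la : ι → ℝ} (hla : ∀ i, 0 ≤ la i) (hla1 : ∑ i, la i = 1) {A : ι → Matrix m m ℝ}
    (hA : ∀ i, negDef (F (A i))) : negDef (F (∑ i, la i • A i)) := by
  intro ρ hρ
  obtain ⟨c, a, e, hae⟩ := hF ρ
  have hcomb : ρ ⬝ᵥ F (∑ i, la i • A i) *ᵥ ρ = ∑ i, la i * (ρ ⬝ᵥ F (A i) *ᵥ ρ) := by
    simp only [hae, sum_mulVec, smul_mulVec, sum_dotProduct, smul_dotProduct, smul_eq_mul]
    rw [Finset.sum_congr rfl fun i _ => mul_add _ _ _, Finset.sum_add_distrib, ← Finset.sum_mul,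
      hla1, one_mul]
  rw [hcomb]
  exact sum_mul_lt_zero_of_convexComb hla hla1 fun i => hA i ρ hρ

lemma convexOn_quadForm {S : Matrix m m ℝ} (hS : ∀ x, 0 ≤ x ⬝ᵥ S *ᵥ x) :
    ConvexOn ℝ Set.univ fun x : m → ℝ => x ⬝ᵥ S *ᵥ x := by
  refine ⟨convex_univ, fun x _ y _ a b ha hb hab => ?_⟩
  obtain rfl : a = 1 - b := by linarith
  have key : (1 - b) * (x ⬝ᵥ S *ᵥ x) + b * (y ⬝ᵥ S *ᵥ y)
      - ((1 - b) • x + b • y) ⬝ᵥ S *ᵥ ((1 - b) • x + b • y)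
      = (1 - b) * b * ((x - y) ⬝ᵥ S *ᵥ (x - y)) := by
    simp only [mulVec_add, mulVec_sub, mulVec_smul, dotProduct_add, dotProduct_sub,
      add_dotProduct, sub_dotProduct, dotProduct_smul, smul_dotProduct, smul_eq_mul]
    ring
  have := mul_nonneg (mul_nonneg ha hb) (hS (x - y))
  simp only [smul_eq_mul]
  linarith

end QuadraticForm

section Blocks

variable {n : ℕ}

@[simp] lemma Mxb_mulVec (a b : Fin n → ℝ) : Mxb n *ᵥ Sum.elim a b = a := by
  simp [Mxb]

@[simp] lemma Mmb_mulVec (a b : Fin n → ℝ) : Mmb n *ᵥ Sum.elim a b = b := by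
  simp [Mmb]

@[simp] lemma Mzb_mulVec (J : Matrix (Fin n) (Fin n) ℝ) (a b : Fin n → ℝ) :
    Mzb J *ᵥ Sum.elim a b = a - J *ᵥ b := by
  simp [Mzb, neg_mulVec, sub_eq_add_neg]

variable (T : ℝ) (J P Q R U Z : Matrix (Fin n) (Fin n) ℝ) (N : Matrix (Fin n) (Fin n ⊕ Fin n) ℝ)

section

variable (A : Matrix (Fin n) (Fin n) ℝ) (a b : Fin n → ℝ)

lemma quadForm_G0 : Sum.elim a b ⬝ᵥ G0 T A J P Q R N *ᵥ Sum.elim a b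
    = 2 * T * (A *ᵥ a ⬝ᵥ P *ᵥ a) - (a - J *ᵥ b) ⬝ᵥ Q *ᵥ (a - J *ᵥ b)
      + (J *ᵥ b ⬝ᵥ P *ᵥ (J *ᵥ b) - b ⬝ᵥ P *ᵥ b)
      + 2 * (N *ᵥ Sum.elim a b ⬝ᵥ (a - J *ᵥ b) - (a - J *ᵥ b) ⬝ᵥ R *ᵥ a) := by
  simp only [G0, add_mulVec, sub_mulVec, smul_mulVec, dotProduct_add, dotProduct_sub,
    dotProduct_smul, quadForm_He, ← mulVec_mulVec, dotProduct_transpose_mulVec', Mxb_mulVec,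
    Mmb_mulVec, Mzb_mulVec, smul_eq_mul]
  ring

lemma quadForm_G1 : Sum.elim a b ⬝ᵥ G1 A J Q R *ᵥ Sum.elim a b
    = 2 * (A *ᵥ a ⬝ᵥ Q *ᵥ (a - J *ᵥ b) + A *ᵥ a ⬝ᵥ R *ᵥ a
      + (a - J *ᵥ b) ⬝ᵥ R *ᵥ (A *ᵥ a)) := by
  simp only [G1, quadForm_He, add_mulVec, dotProduct_add, ← mulVec_mulVec,
    dotProduct_transpose_mulVec', Mxb_mulVec, Mzb_mulVec]

lemma quadForm_G2 : Sum.elim a b ⬝ᵥ G2 J U *ᵥ Sum.elim a b = J *ᵥ b ⬝ᵥ U *ᵥ (J *ᵥ b) := by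
  simp only [G2, ← mulVec_mulVec, dotProduct_transpose_mulVec', Mmb_mulVec]

end

lemma quadForm_lyapunov_affine (ρ : Fin n → ℝ) :
    ∃ (c : ℝ) (a e : Fin n → ℝ), ∀ A, ρ ⬝ᵥ (Aᵀ * P + P * A) *ᵥ ρ = c + A *ᵥ a ⬝ᵥ e :=
  ⟨0, ρ, P *ᵥ ρ + Pᵀ *ᵥ ρ, fun A => by
    simp only [add_mulVec, ← mulVec_mulVec, dotProduct_add, dotProduct_transpose_mulVec']
    rw [dotProduct_comm ρ, zero_add]⟩

lemma quadForm_PsiR_affine (ρ : (Fin n ⊕ Fin n) ⊕ Fin n → ℝ) :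
    ∃ (c : ℝ) (a e : Fin n → ℝ), ∀ A, ρ ⬝ᵥ PsiR T A J P Z Q U R N *ᵥ ρ = c + A *ᵥ a ⬝ᵥ e := by
  obtain ⟨a, b, z, rfl⟩ : ∃ a b z, ρ = Sum.elim (Sum.elim a b) z :=
    ⟨_, _, _, by ext ((i | i) | i) <;> rfl⟩
  refine ⟨Sum.elim (Sum.elim a b) z ⬝ᵥ PsiR T 0 J P Z Q U R N *ᵥ Sum.elim (Sum.elim a b) z, a,
    (2 * T) • (P *ᵥ a + Q *ᵥ (a - J *ᵥ b) + R *ᵥ a + Rᵀ *ᵥ (a - J *ᵥ b)) + Z *ᵥ z + Zᵀ *ᵥ z,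
    fun A => ?_⟩
  simp only [PsiR, quadForm_fromBlocks, add_mulVec, smul_mulVec, dotProduct_add, dotProduct_smul,
    quadForm_G0, quadForm_G1, quadForm_G2, ← mulVec_mulVec, dotProduct_transpose_mulVec',
    Mxb_mulVec, zero_mulVec, mulVec_zero, zero_dotProduct, dotProduct_zero, smul_eq_mul]
  rw [dotProduct_comm (R *ᵥ _), dotProduct_comm (Z *ᵥ _)]
  ring

lemma quadForm_PhiR_affine (ρ : (Fin n ⊕ Fin n) ⊕ Fin n → ℝ) :
    ∃ (c : ℝ) (a e : Fin n → ℝ), ∀ A, ρ ⬝ᵥ PhiR T A J P Z Q U R N *ᵥ ρ = c + A *ᵥ a ⬝ᵥ e := by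
  obtain ⟨a, b, z, rfl⟩ : ∃ a b z, ρ = Sum.elim (Sum.elim a b) z :=
    ⟨_, _, _, by ext ((i | i) | i) <;> rfl⟩
  refine ⟨Sum.elim (Sum.elim a b) z ⬝ᵥ PhiR T 0 J P Z Q U R N *ᵥ Sum.elim (Sum.elim a b) z, a,
    (2 * T) • (P *ᵥ a), fun A => ?_⟩
  simp only [PhiR, quadForm_fromBlocks, sub_mulVec, smul_mulVec, dotProduct_sub, dotProduct_smul,
    quadForm_G0, zero_mulVec, zero_dotProduct, smul_eq_mul]
  ring

end Blocks

section Flow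

variable {m k : Type*} [Fintype m] [Fintype k] {n : ℕ}

lemma _root_.HasDerivAt.dotProduct_mulVec {f : ℝ → m → ℝ} {g : ℝ → k → ℝ} {f' : m → ℝ}
    {g' : k → ℝ} {t : ℝ} (K : Matrix m k ℝ) (hf : HasDerivAt f f' t) (hg : HasDerivAt g g' t) :
    HasDerivAt (fun s => f s ⬝ᵥ K *ᵥ g s) (f' ⬝ᵥ K *ᵥ g t + f t ⬝ᵥ K *ᵥ g') t := by
  have hKg : HasDerivAt (fun s => K *ᵥ g s) (K *ᵥ g') t :=
    (LinearMap.toContinuousLinearMap K.mulVecLin).hasFDerivAt.comp_hasDerivAt t hg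
  have hsum := HasDerivAt.fun_sum (u := Finset.univ) fun i _ =>
    (hasDerivAt_pi.1 hf i).mul (hasDerivAt_pi.1 hKg i)
  exact hsum.congr_deriv (by simp only [dotProduct, Finset.sum_add_distrib])

section
attribute [local instance] Matrix.linftyOpNormedRing Matrix.linftyOpNormedAlgebra

lemma hasDerivAt_mexp_smul_mulVec (A : Matrix (Fin n) (Fin n) ℝ) (v : Fin n → ℝ) (t : ℝ) :
    HasDerivAt (fun s : ℝ => mexp (s • A) *ᵥ v) (A *ᵥ (mexp (t • A) *ᵥ v)) t := by
  have := (LinearMap.toContinuousLinearMap ((mulVecBilin ℝ ℝ).flip v)).hasFDerivAt.comp_hasDerivAt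
    t (hasDerivAt_exp_smul_const' (𝕂 := ℝ) A t)
  exact this.congr_deriv (by rw [mexp, mulVec_mulVec]; rfl)

end

lemma mexp_transpose (A : Matrix (Fin n) (Fin n) ℝ) (t : ℝ) :
    mexp (t • Aᵀ) = (mexp (t • A))ᵀ := by
  rw [mexp, mexp, ← transpose_smul, Matrix.exp_transpose]

lemma quadForm_scrI (P A J : Matrix (Fin n) (Fin n) ℝ) (θ : ℝ) (y : Fin n → ℝ) :
    y ⬝ᵥ scrI P A J θ *ᵥ y
      = mexp (θ • A) *ᵥ (J *ᵥ y) ⬝ᵥ P *ᵥ (mexp (θ • A) *ᵥ (J *ᵥ y)) - y ⬝ᵥ P *ᵥ y := by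
  simp only [scrI, mexp_transpose, sub_mulVec, dotProduct_sub, ← mulVec_mulVec,
    dotProduct_transpose_mulVec']

lemma antitone_quadForm_mexp {A P : Matrix (Fin n) (Fin n) ℝ}
    (hAP : ∀ x, x ⬝ᵥ (Aᵀ * P + P * A) *ᵥ x ≤ 0) (v : Fin n → ℝ) :
    Antitone fun t : ℝ => mexp (t • A) *ᵥ v ⬝ᵥ P *ᵥ (mexp (t • A) *ᵥ v) := by
  have hflow := hasDerivAt_mexp_smul_mulVec A v
  refine antitone_of_hasDerivAt_nonpos (fun t => (hflow t).dotProduct_mulVec P (hflow t))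
    fun t => ?_
  have := hAP (mexp (t • A) *ᵥ v)
  simp only [add_mulVec, dotProduct_add, ← mulVec_mulVec, dotProduct_transpose_mulVec'] at this
  exact this

end Flow

section LoopedFunctional

variable {m : Type*} [Fintype m] {n : ℕ}

/-- The right-hand side is `∫₀ˢ (w' + c)ᵀ Z (w' + c)`, expanded. -/
lemma integral_quadForm_add_nonneg {Z : Matrix m m ℝ} (hZsym : Z.IsSymm)
    (hZ : ∀ v, 0 ≤ v ⬝ᵥ Z *ᵥ v) {w w' : ℝ → m → ℝ} (hw : ∀ r, HasDerivAt w (w' r) r)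
    (hw' : Continuous w') (c : m → ℝ) {s : ℝ} (hs : 0 ≤ s) :
    0 ≤ (∫ r in 0..s, w' r ⬝ᵥ Z *ᵥ w' r) + 2 * (c ⬝ᵥ Z *ᵥ (w s - w 0)) + s * (c ⬝ᵥ Z *ᵥ c) := by
  have hh : Continuous fun r => w' r ⬝ᵥ Z *ᵥ w' r := (continuous_quadForm Z).comp hw'
  have hderiv : ∀ r, HasDerivAt
      (fun r => (∫ r in 0..r, w' r ⬝ᵥ Z *ᵥ w' r) + 2 * (c ⬝ᵥ Z *ᵥ (w r - w 0)) + r * (c ⬝ᵥ Z *ᵥ c))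
      ((w' r + c) ⬝ᵥ Z *ᵥ (w' r + c)) r := by
    intro r
    have hc := (hasDerivAt_const r c).dotProduct_mulVec Z ((hw r).sub_const (w 0))
    refine (((hh.integral_hasStrictDerivAt 0 r).hasDerivAt.add (hc.const_mul 2)).add
      ((hasDerivAt_id r).mul_const (c ⬝ᵥ Z *ᵥ c))).congr_deriv ?_
    simp only [mulVec_add, add_dotProduct, dotProduct_add, zero_dotProduct,
      hZsym.dotProduct_mulVec_comm (w' r) c]
    ring
  have hmono := monotone_of_hasDerivAt_nonneg hderiv fun r => hZ _
  simpa using hmono hs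

noncomputable def loopCorrection (A J Q R U Z : Matrix (Fin n) (Fin n) ℝ) (x : ℝ → Fin n → ℝ)
    (y : Fin n → ℝ) (s : ℝ) : ℝ :=
  (x s - J *ᵥ y) ⬝ᵥ Q *ᵥ (x s - J *ᵥ y) + 2 * ((x s - J *ᵥ y) ⬝ᵥ R *ᵥ x s)
    + s * (J *ᵥ y ⬝ᵥ U *ᵥ (J *ᵥ y)) + ∫ r in 0..s, A *ᵥ x r ⬝ᵥ Z *ᵥ (A *ᵥ x r)

/-- The looped functional `Θ`, meant to be evaluated along a solution `x` of `ẋ = A x` with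
`x 0 = J y`. -/
noncomputable def loopedFunctional (T : ℝ) (A J P Q R U Z : Matrix (Fin n) (Fin n) ℝ)
    (x : ℝ → Fin n → ℝ) (y : Fin n → ℝ) (s : ℝ) : ℝ :=
  T * (x s ⬝ᵥ P *ᵥ x s) - s * (y ⬝ᵥ P *ᵥ y) - (T - s) * (J *ᵥ y ⬝ᵥ P *ᵥ (J *ᵥ y))
    + (T - s) * loopCorrection A J Q R U Z x y s

variable {T : ℝ} {A J P Q R U Z : Matrix (Fin n) (Fin n) ℝ}
  {N : Matrix (Fin n) (Fin n ⊕ Fin n) ℝ} {x : ℝ → Fin n → ℝ} {y : Fin n → ℝ}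

lemma hasDerivAt_loopCorrection (hQsym : Q.IsSymm) (hx : ∀ s, HasDerivAt x (A *ᵥ x s) s)
    (s : ℝ) :
    HasDerivAt (loopCorrection A J Q R U Z x y)
      (Sum.elim (x s) y ⬝ᵥ (G1 A J Q R + G2 J U) *ᵥ Sum.elim (x s) y
        + A *ᵥ x s ⬝ᵥ Z *ᵥ (A *ᵥ x s)) s := by
  have hζ := (hx s).sub_const (J *ᵥ y)
  have hg : Continuous fun r => A *ᵥ x r ⬝ᵥ Z *ᵥ (A *ᵥ x r) := (continuous_quadForm Z).comp
    (continuous_const.matrix_mulVec (continuous_iff_continuousAt.2 fun r => (hx r).continuousAt))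
  refine ((((hζ.dotProduct_mulVec Q hζ).add ((hζ.dotProduct_mulVec R (hx s)).const_mul 2)).add
    ((hasDerivAt_id s).mul_const _)).add
    (hg.integral_hasStrictDerivAt 0 s).hasDerivAt).congr_deriv ?_
  rw [add_mulVec, dotProduct_add, quadForm_G1, quadForm_G2,
    hQsym.dotProduct_mulVec_comm (x s - J *ᵥ y)]
  ring

lemma hasDerivAt_loopedFunctional (hPsym : P.IsSymm) (hQsym : Q.IsSymm)
    (hx : ∀ s, HasDerivAt x (A *ᵥ x s) s) (s : ℝ) :
    HasDerivAt (loopedFunctional T A J P Q R U Z x y)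
      (2 * T * (A *ᵥ x s ⬝ᵥ P *ᵥ x s) - y ⬝ᵥ P *ᵥ y + J *ᵥ y ⬝ᵥ P *ᵥ (J *ᵥ y)
        - loopCorrection A J Q R U Z x y s
        + (T - s) * (Sum.elim (x s) y ⬝ᵥ (G1 A J Q R + G2 J U) *ᵥ Sum.elim (x s) y
          + A *ᵥ x s ⬝ᵥ Z *ᵥ (A *ᵥ x s))) s := by
  have hlin : HasDerivAt (fun r : ℝ => T - r) (-1) s := by
    simpa using (hasDerivAt_id s).const_sub T
  refine ((((((hx s).dotProduct_mulVec P (hx s)).const_mul T).sub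
    ((hasDerivAt_id s).mul_const _)).sub (hlin.mul_const _)).add
    (hlin.mul (hasDerivAt_loopCorrection hQsym hx s))).congr_deriv ?_
  rw [hPsym.dotProduct_mulVec_comm (x s)]
  ring

lemma loopedFunctional_strictAntiOn (hT : 0 < T) (hPsym : P.IsSymm) (hQsym : Q.IsSymm)
    (hZsym : Z.IsSymm) (hZ : posDef Z) (hPsi : negDef (PsiR T A J P Z Q U R N))
    (hPhi : negDef (PhiR T A J P Z Q U R N)) (hx : ∀ s, HasDerivAt x (A *ᵥ x s) s)
    (hx0 : x 0 = J *ᵥ y) (hy : y ≠ 0) :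
    StrictAntiOn (loopedFunctional T A J P Q R U Z x y) (Set.Icc 0 T) := by
  refine strictAntiOn_of_hasDerivWithinAt_neg (convex_Icc 0 T)
    (HasDerivAt.continuousOn fun s _ => hasDerivAt_loopedFunctional hPsym hQsym hx s)
    (fun s _ => (hasDerivAt_loopedFunctional hPsym hQsym hx s).hasDerivWithinAt) fun s hs => ?_
  rw [interior_Icc] at hs
  obtain ⟨u, hu⟩ := mulVec_surjective_of_posDef hZ (N *ᵥ Sum.elim (x s) y)
  have hne : ∀ z : Fin n → ℝ, Sum.elim (Sum.elim (x s) y) z ≠ 0 :=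
    fun z h => hy (funext fun i => congrFun h (.inl (.inr i)))
  have hX := hPsi _ (hne (T • (A *ᵥ x s)))
  have hY := hPhi _ (hne (T • u))
  have hI := integral_quadForm_add_nonneg hZsym (quadForm_nonneg_of_posDef hZ) hx
    (continuous_const.matrix_mulVec (continuous_iff_continuousAt.2 fun r => (hx r).continuousAt))
    u hs.1.le
  rw [hx0, hZsym.dotProduct_mulVec_comm u, sub_dotProduct] at hI
  have hcancel : ∀ q : ℝ, T * -(T⁻¹ * (T * q)) = -(T * q) := fun q => by field_simp
  simp only [PsiR, PhiR, quadForm_fromBlocks, add_mulVec, sub_mulVec, smul_mulVec, neg_mulVec,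
    mulVec_smul, dotProduct_add, dotProduct_sub, dotProduct_smul, smul_dotProduct, dotProduct_neg,
    ← mulVec_mulVec, dotProduct_transpose_mulVec', Mxb_mulVec, quadForm_G0, quadForm_G2, ← hu,
    dotProduct_comm (Z *ᵥ u), sub_dotProduct, smul_eq_mul, hcancel] at hX hY
  rw [loopCorrection, add_mulVec, dotProduct_add, quadForm_G2]
  simp only [sub_dotProduct]
  -- `T Θ'(s) = (T - s) X + s Y - T I`, where `hX : X < 0`, `hY : Y < 0`, `hI : 0 ≤ I`
  nlinarith [mul_neg_of_pos_of_neg (sub_pos.2 hs.2) hX, mul_neg_of_pos_of_neg hs.1 hY,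
    mul_nonneg hT.le hI]

lemma quadForm_flow_lt (hT : 0 < T) (hPsym : P.IsSymm) (hQsym : Q.IsSymm) (hZsym : Z.IsSymm)
    (hZ : posDef Z) (hPsi : negDef (PsiR T A J P Z Q U R N))
    (hPhi : negDef (PhiR T A J P Z Q U R N)) (hx : ∀ s, HasDerivAt x (A *ᵥ x s) s)
    (hx0 : x 0 = J *ᵥ y) (hy : y ≠ 0) : x T ⬝ᵥ P *ᵥ x T < y ⬝ᵥ P *ᵥ y := by
  have h := loopedFunctional_strictAntiOn hT hPsym hQsym hZsym hZ hPsi hPhi hx hx0 hy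
    (Set.left_mem_Icc.2 hT.le) (Set.right_mem_Icc.2 hT.le) hT
  simp only [loopedFunctional, loopCorrection, hx0, sub_self, sub_zero, zero_mul,
    zero_dotProduct, mul_zero, intervalIntegral.integral_same, add_zero] at h
  nlinarith

end LoopedFunctional

theorem negDef_scrI_of_negDef_PsiR_PhiR {n : ℕ} {T : ℝ} (hT : 0 < T)
    {A J P Q R U Z : Matrix (Fin n) (Fin n) ℝ} {N : Matrix (Fin n) (Fin n ⊕ Fin n) ℝ}
    (hPsym : P.IsSymm) (hQsym : Q.IsSymm) (hZsym : Z.IsSymm) (hZ : posDef Z)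
    (hPsi : negDef (PsiR T A J P Z Q U R N)) (hPhi : negDef (PhiR T A J P Z Q U R N)) :
    negDef (scrI P A J T) := fun y hy => by
  rw [quadForm_scrI, sub_neg]
  exact quadForm_flow_lt hT hPsym hQsym hZsym hZ hPsi hPhi
    (hasDerivAt_mexp_smul_mulVec A (J *ᵥ y)) (by simp [mexp]) hy

section Robustness

variable {n : ℕ} {ι : Type*} [Fintype ι] {A P : Matrix (Fin n) (Fin n) ℝ}

lemma quadForm_scrI_sum_smul_le (hP : ∀ v, 0 ≤ v ⬝ᵥ P *ᵥ v) {μ : ι → ℝ} (hμ : ∀ j, 0 ≤ μ j)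
    (hμ1 : ∑ j, μ j = 1) (J : ι → Matrix (Fin n) (Fin n) ℝ) (θ : ℝ) (y : Fin n → ℝ) :
    y ⬝ᵥ scrI P A (∑ j, μ j • J j) θ *ᵥ y ≤ ∑ j, μ j * (y ⬝ᵥ scrI P A (J j) θ *ᵥ y) := by
  have hjensen := (convexOn_quadForm hP).map_sum_le (t := Finset.univ) (fun j _ => hμ j) hμ1
    fun j _ => Set.mem_univ (mexp (θ • A) *ᵥ (J j *ᵥ y))
  simp only [quadForm_scrI, sum_mulVec, smul_mulVec, mulVec_sum, mulVec_smul, mul_sub,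
    Finset.sum_sub_distrib, ← Finset.sum_mul, hμ1, one_mul, smul_eq_mul] at hjensen ⊢
  linarith

lemma antitone_quadForm_scrI (hAP : ∀ x, x ⬝ᵥ (Aᵀ * P + P * A) *ᵥ x ≤ 0)
    (J : Matrix (Fin n) (Fin n) ℝ) (y : Fin n → ℝ) :
    Antitone fun θ => y ⬝ᵥ scrI P A J θ *ᵥ y := fun _ _ h => by
  simp only [quadForm_scrI]
  exact sub_le_sub_right (antitone_quadForm_mexp hAP _ h) _

end Robustness

section Stability

variable {m : Type*} [Fintype m]

lemma exists_quadForm_le_neg_mul_norm_sq {M : Matrix m m ℝ} (hM : negDef M) :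
    ∃ c > 0, ∀ x, x ⬝ᵥ M *ᵥ x ≤ -(c * ‖x‖ ^ 2) := by
  obtain ⟨C, hC, hsphere⟩ :
      ∃ C < 0, ∀ w ∈ Metric.sphere (0 : m → ℝ) 1, w ⬝ᵥ M *ᵥ w ≤ C := by
    rcases (Metric.sphere (0 : m → ℝ) 1).eq_empty_or_nonempty with h | h
    · exact ⟨-1, by norm_num, by simp [h]⟩
    · obtain ⟨u, hu, hmax⟩ :=
        (isCompact_sphere 0 1).exists_isMaxOn h (continuous_quadForm M).continuousOn
      exact ⟨_, hM u (ne_zero_of_mem_unit_sphere ⟨u, hu⟩), fun w hw => hmax hw⟩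
  refine ⟨-C, by linarith, fun x => ?_⟩
  rcases eq_or_ne x 0 with rfl | hx
  · simp
  have hnorm : 0 < ‖x‖ := norm_pos_iff.2 hx
  have h := hsphere (‖x‖⁻¹ • x) (by simp [norm_smul, hnorm.ne'])
  rw [mulVec_smul, dotProduct_smul, smul_dotProduct, smul_eq_mul, smul_eq_mul] at h
  have h' : x ⬝ᵥ M *ᵥ x = ‖x‖ ^ 2 * (‖x‖⁻¹ * (‖x‖⁻¹ * (x ⬝ᵥ M *ᵥ x))) := by field_simp
  rw [h']
  nlinarith [sq_nonneg ‖x‖]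

lemma tendsto_zero_of_add_mul_le {V f : ℕ → ℝ} {c : ℝ} (hc : 0 < c) (hV : ∀ k, 0 ≤ V k)
    (hf : ∀ k, 0 ≤ f k) (h : ∀ k, V (k + 1) + c * f k ≤ V k) : Tendsto f atTop (nhds 0) := by
  have htel : ∀ K, V K + c * ∑ k ∈ Finset.range K, f k ≤ V 0 := by
    intro K
    induction K with
    | zero => simp
    | succ K ih => rw [Finset.sum_range_succ]; linarith [h K]
  refine (summable_of_sum_range_le (c := V 0 / c) hf fun K => ?_).tendsto_atTop_zero
  rw [le_div_iff₀ hc, mul_comm]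
  linarith [htel K, hV K]

lemma tendsto_zero_of_dwellTime {n : ℕ} {A J P : Matrix (Fin n) (Fin n) ℝ} {T : ℝ}
    (hP : ∀ v, 0 ≤ v ⬝ᵥ P *ᵥ v) (hAP : ∀ v, v ⬝ᵥ (Aᵀ * P + P * A) *ᵥ v ≤ 0)
    (hI : negDef (scrI P A J T)) {Tk : ℕ → ℝ} (hTk : ∀ k, T ≤ Tk k) {x : ℕ → Fin n → ℝ}
    (hx : ∀ k, x (k + 1) = (mexp (Tk k • A) * J) *ᵥ x k) : Tendsto x atTop (nhds 0) := by
  obtain ⟨c, hc, hbound⟩ := exists_quadForm_le_neg_mul_norm_sq hI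
  have hstep : ∀ k, x (k + 1) ⬝ᵥ P *ᵥ x (k + 1) + c * ‖x k‖ ^ 2 ≤ x k ⬝ᵥ P *ᵥ x k := by
    intro k
    have hmono := antitone_quadForm_scrI hAP J (x k) (hTk k)
    have hneg := hbound (x k)
    simp only [quadForm_scrI] at hmono hneg
    rw [hx k, ← mulVec_mulVec]
    linarith
  have hsq := tendsto_zero_of_add_mul_le hc (fun k => hP _) (fun k => sq_nonneg _) hstep
  rw [tendsto_zero_iff_norm_tendsto_zero]
  simpa [Real.sqrt_sq (norm_nonneg _)] using hsq.sqrt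

end Stability

end RobustDwellTime

open RobustDwellTime

theorem stmt16_general {n NA NJ : ℕ} (T : ℝ) (hT : 0 < T)
    (A : Fin NA → Matrix (Fin n) (Fin n) ℝ) (Jm : Fin NJ → Matrix (Fin n) (Fin n) ℝ)
    (P : Matrix (Fin n) (Fin n) ℝ) (hPsym : P.IsSymm) (hP : posDef P)
    (Z Q U R : Fin NJ → Matrix (Fin n) (Fin n) ℝ)
    (N : Fin NJ → Matrix (Fin n) (Fin n ⊕ Fin n) ℝ)
    (hZsym : ∀ j, (Z j).IsSymm) (hZ : ∀ j, posDef (Z j))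
    (hQsym : ∀ j, (Q j).IsSymm)
    (hPsi : ∀ i j, negDef (PsiR T (A i) (Jm j) P (Z j) (Q j) (U j) (R j) (N j)))
    (hPhi : ∀ i j, negDef (PhiR T (A i) (Jm j) P (Z j) (Q j) (U j) (R j) (N j)))
    (hC : ∀ i, negDef ((A i)ᵀ * P + P * A i)) :
    ∀ (la : Fin NA → ℝ) (mu : Fin NJ → ℝ),
      (∀ i, 0 ≤ la i) → ∑ i, la i = 1 → (∀ j, 0 ≤ mu j) → ∑ j, mu j = 1 →
      (∀ θ : ℝ, T ≤ θ →
        negDef (scrI P (∑ i, la i • A i) (∑ j, mu j • Jm j) θ)) ∧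
      (∀ Tk : ℕ → ℝ, (∀ k, T ≤ Tk k) →
        ∀ x₀ : Fin n → ℝ, ∀ x : ℕ → Fin n → ℝ, x 0 = x₀ →
          (∀ k, x (k + 1) =
            (mexp (Tk k • (∑ i, la i • A i)) * (∑ j, mu j • Jm j)).mulVec (x k)) →
          Tendsto x atTop (nhds 0)) := by
  intro la mu hla hla1 hmu hmu1
  have hPnonneg := quadForm_nonneg_of_posDef hP
  have hAP := quadForm_nonpos_of_negDef
    (negDef_convexComb_of_affine (quadForm_lyapunov_affine P) hla hla1 hC)
  have hvertex : ∀ j, negDef (scrI P (∑ i, la i • A i) (Jm j) T) := fun j =>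
    negDef_scrI_of_negDef_PsiR_PhiR hT hPsym (hQsym j) (hZsym j) (hZ j)
      (negDef_convexComb_of_affine (quadForm_PsiR_affine T (Jm j) P (Q j) (R j) (U j) (Z j) (N j))
        hla hla1 fun i => hPsi i j)
      (negDef_convexComb_of_affine (quadForm_PhiR_affine T (Jm j) P (Q j) (R j) (U j) (Z j) (N j))
        hla hla1 fun i => hPhi i j)
  have hdwell : ∀ θ, T ≤ θ → negDef (scrI P (∑ i, la i • A i) (∑ j, mu j • Jm j) θ) :=
    fun θ hθ y hy => calc
      _ ≤ y ⬝ᵥ scrI P (∑ i, la i • A i) (∑ j, mu j • Jm j) T *ᵥ y :=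
        antitone_quadForm_scrI hAP _ y hθ
      _ ≤ ∑ j, mu j * (y ⬝ᵥ scrI P (∑ i, la i • A i) (Jm j) T *ᵥ y) :=
        quadForm_scrI_sum_smul_le hPnonneg hmu hmu1 Jm T y
      _ < 0 := sum_mul_lt_zero_of_convexComb hmu hmu1 fun j => hvertex j y hy
  exact ⟨hdwell, fun Tk hTk _ x _ hx =>
    tendsto_zero_of_dwellTime hPnonneg hAP (hdwell T le_rfl) hTk hx⟩

/-- Robust minimal dwell-time: if `Ψᵢⱼ(T) ≺ 0`, `Φᵢⱼ(T) ≺ 0` and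
`AᵢᵀP + PAᵢ ≺ 0` for all vertices, then `ℐ(P,A,J,θ) ≺ 0` for all `θ ≥ T`, `A ∈ co{Aᵢ}`,
`J ∈ co{Jⱼ}`; consequently every impulsive trajectory with dwell-times `T_k ≥ T` tends
to `0`. -/
theorem stmt16 {n NA NJ : ℕ} (T : ℝ) (hT : 0 < T)
    (A : Fin NA → Matrix (Fin n) (Fin n) ℝ) (Jm : Fin NJ → Matrix (Fin n) (Fin n) ℝ)
    (P : Matrix (Fin n) (Fin n) ℝ) (hPsym : P.IsSymm) (hP : posDef P)
    (Z Q U R : Fin NJ → Matrix (Fin n) (Fin n) ℝ)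
    (N : Fin NJ → Matrix (Fin n) (Fin n ⊕ Fin n) ℝ)
    (hZsym : ∀ j, (Z j).IsSymm) (hZ : ∀ j, posDef (Z j))
    (hQsym : ∀ j, (Q j).IsSymm) (hUsym : ∀ j, (U j).IsSymm)
    (hPsi : ∀ i j, negDef (PsiR T (A i) (Jm j) P (Z j) (Q j) (U j) (R j) (N j)))
    (hPhi : ∀ i j, negDef (PhiR T (A i) (Jm j) P (Z j) (Q j) (U j) (R j) (N j)))
    (hC : ∀ i, negDef ((A i)ᵀ * P + P * A i)) :
    ∀ (la : Fin NA → ℝ) (mu : Fin NJ → ℝ),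
      (∀ i, 0 ≤ la i) → ∑ i, la i = 1 → (∀ j, 0 ≤ mu j) → ∑ j, mu j = 1 →
      (∀ θ : ℝ, T ≤ θ →
        negDef (scrI P (∑ i, la i • A i) (∑ j, mu j • Jm j) θ)) ∧
      (∀ Tk : ℕ → ℝ, (∀ k, T ≤ Tk k) →
        ∀ x₀ : Fin n → ℝ, ∀ x : ℕ → Fin n → ℝ, x 0 = x₀ →
          (∀ k, x (k + 1) =
            (mexp (Tk k • (∑ i, la i • A i)) * (∑ j, mu j • Jm j)).mulVec (x k)) →
          Tendsto x atTop (nhds 0)) :=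
  stmt16_general T hT A Jm P hPsym hP Z Q U R N hZsym hZ hQsym hPsi hPhi hC
end

section
/- (Robust ranged dwell-time.) Let 0 < T_min ≤ T_max < ∞ and let A₁, …, A_{N_A} and J₁, …, J_{N_J} be real n×n matrices. Suppose there exist a real symmetric positive definite n×n matrix P and, for each j = 1, …, N_J, real symmetric positive definite n×n matrices Zⱼ, real symmetric n×n matrices Qⱼ and Uⱼ, real n×n matrices Rⱼ, and real n×2n matrices Nⱼ such that Ψᵢⱼ(T) and Φᵢⱼ(T) are negative definite for all T ∈ {T_min, T_max}, all i = 1, …, N_A, and all j = 1, …, N_J. Then ℐ(P,A,J,θ) is negative definite for every θ ∈ [T_min, T_max], every A in the convex hull of {A₁, …, A_{N_A}}, and every J in the convex hull of {J₁, …, J_{N_J}}; consequently, for every sequence (T_k)_{k∈ℕ} with T_k ∈ [T_min, T_max] and every such pair (A, J), the sequence x_{k+1} = exp(T_k·A)·J·x_k tends to 0 for every initial vector x₀. -/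
/-!
Taking Schur complements, `Ψᵢⱼ(T) ≺ 0` and `Φᵢⱼ(T) ≺ 0` say that two quadratic forms in
`(p, y)` are negative. Both are affine in `T` and convex in `b = Aᵢ p`, so they stay negative for
every `θ ∈ [T_min, T_max]` and every `A` in the convex hull of the `Aᵢ`. Along the flow
`χ(s) = exp(sA) J y`, the derivative of the looped functional `F` is `1/θ` times the combination,
with weights `θ - s` and `s`, of these two forms minus a nonnegative integral slack; hence
`F(θ) < F(0)`, which says `yᵀ ℐ(P,A,J,θ) y < 0`. Since `J ↦ (exp(θA) J y)ᵀ P (exp(θA) J y)` is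
convex, this passes from the `Jⱼ` to their convex hull. Finally `ℐ ≺ 0` on the compact interval
gives a uniform contraction factor `ρ < 1` for the Lyapunov function `xᵀPx`, so `x_k → 0`.
-/

open Matrix Filter

section QuadraticForms

variable {m k : Type*} [Fintype m] [Fintype k]

lemma transpose_mulVec_dotProduct (M : Matrix m k ℝ) (w : m → ℝ) (v : k → ℝ) :
    (Mᵀ *ᵥ w) ⬝ᵥ v = w ⬝ᵥ M *ᵥ v := by
  rw [dotProduct_comm, dotProduct_transpose_mulVec]

lemma Matrix.IsSymm.dotProduct_mulVec_comm_s18 {M : Matrix m m ℝ} (hM : M.IsSymm) (x y : m → ℝ) :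
    x ⬝ᵥ M *ᵥ y = y ⬝ᵥ M *ᵥ x := by
  conv_lhs => rw [← hM]
  rw [dotProduct_transpose_mulVec]

lemma dotProduct_smul_mulVec_smul (M : Matrix m m ℝ) (c : ℝ) (v : m → ℝ) :
    (c • v) ⬝ᵥ M *ᵥ (c • v) = c ^ 2 * (v ⬝ᵥ M *ᵥ v) := by
  rw [smul_dotProduct, mulVec_smul, dotProduct_smul, smul_eq_mul, smul_eq_mul]
  ring

lemma sumElim_dotProduct_fromBlocks_mulVec (A : Matrix m m ℝ) (B : Matrix m k ℝ)
    (C : Matrix k m ℝ) (D : Matrix k k ℝ) (u : m → ℝ) (w : k → ℝ) :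
    Sum.elim u w ⬝ᵥ fromBlocks A B C D *ᵥ Sum.elim u w
      = u ⬝ᵥ A *ᵥ u + u ⬝ᵥ B *ᵥ w + w ⬝ᵥ C *ᵥ u + w ⬝ᵥ D *ᵥ w := by
  rw [fromBlocks_mulVec]
  simp only [Sum.elim_comp_inl, Sum.elim_comp_inr, sumElim_dotProduct_sumElim, dotProduct_add]
  ring

lemma posDef.posSemidef {Z : Matrix m m ℝ} (hZ : posDef Z) : posSemidef Z := by
  intro x
  rcases eq_or_ne x 0 with rfl | hx
  · simp
  · exact (hZ x hx).le

lemma posDef.isUnit_det [DecidableEq m] {Z : Matrix m m ℝ} (hZ : posDef Z) : IsUnit Z.det := by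
  rw [isUnit_iff_ne_zero]
  intro hdet
  obtain ⟨v, hv, hZv⟩ := exists_mulVec_eq_zero_iff.mpr hdet
  simpa [hZv] using hZ v hv

lemma posDef.mulVec_inv_mulVec [DecidableEq m] {Z : Matrix m m ℝ} (hZ : posDef Z) (a : m → ℝ) :
    Z *ᵥ (Z⁻¹ *ᵥ a) = a := by
  rw [mulVec_mulVec, mul_nonsing_inv _ hZ.isUnit_det, one_mulVec]

/-- The test vector is `(x, T • Z⁻¹ *ᵥ Bᵀ *ᵥ x)`, whose last block maximises the form. -/
lemma schur_complement_neg_of_negDef_fromBlocks [DecidableEq k] {A : Matrix m m ℝ}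
    {B : Matrix m k ℝ} {Z : Matrix k k ℝ} {T : ℝ} (hT : 0 < T) (hZ : posDef Z)
    (h : negDef (fromBlocks A B Bᵀ (-(T⁻¹ • Z)))) {x : m → ℝ} (hx : x ≠ 0) :
    x ⬝ᵥ A *ᵥ x + T * ((Bᵀ *ᵥ x) ⬝ᵥ Z⁻¹ *ᵥ (Bᵀ *ᵥ x)) < 0 := by
  set a := Bᵀ *ᵥ x
  have hxw : Sum.elim x (T • Z⁻¹ *ᵥ a) ≠ 0 := fun h0 =>
    hx (funext fun i => congrFun h0 (Sum.inl i))
  have hquad := h _ hxw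
  have hB : x ⬝ᵥ B *ᵥ (T • Z⁻¹ *ᵥ a) = T * (a ⬝ᵥ Z⁻¹ *ᵥ a) := by
    rw [← transpose_mulVec_dotProduct, dotProduct_smul, smul_eq_mul]
  have hBt : (T • Z⁻¹ *ᵥ a) ⬝ᵥ Bᵀ *ᵥ x = T * (a ⬝ᵥ Z⁻¹ *ᵥ a) := by
    rw [smul_dotProduct, smul_eq_mul, dotProduct_comm]
  have hZZ : (T • Z⁻¹ *ᵥ a) ⬝ᵥ -(T⁻¹ • Z) *ᵥ (T • Z⁻¹ *ᵥ a) = -(T * (a ⬝ᵥ Z⁻¹ *ᵥ a)) := by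
    rw [neg_mulVec, smul_mulVec, mulVec_smul, hZ.mulVec_inv_mulVec, smul_smul,
      inv_mul_cancel₀ hT.ne', one_smul, dotProduct_neg, smul_dotProduct, smul_eq_mul,
      dotProduct_comm]
  rw [sumElim_dotProduct_fromBlocks_mulVec, hB, hBt, hZZ] at hquad
  linarith

lemma posSemidef.smul {Z : Matrix m m ℝ} (hZ : posSemidef Z) {c : ℝ}
    (hc : 0 ≤ c) : posSemidef (c • Z) := fun x => by
  rw [smul_mulVec, dotProduct_smul, smul_eq_mul]
  exact mul_nonneg hc (hZ x)

lemma convexOn_quadratic {Z : Matrix m m ℝ} (hZ : posSemidef Z) (c : ℝ) (w : m → ℝ) :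
    ConvexOn ℝ Set.univ fun b => c + w ⬝ᵥ b + b ⬝ᵥ Z *ᵥ b := by
  refine ⟨convex_univ, fun x _ y _ a b ha hb hab => ?_⟩
  have key : a * (c + w ⬝ᵥ x + x ⬝ᵥ Z *ᵥ x) + b * (c + w ⬝ᵥ y + y ⬝ᵥ Z *ᵥ y)
      - (c + w ⬝ᵥ (a • x + b • y) + (a • x + b • y) ⬝ᵥ Z *ᵥ (a • x + b • y))
      = a * b * ((x - y) ⬝ᵥ Z *ᵥ (x - y)) := by
    obtain rfl : b = 1 - a := by linarith
    simp only [dotProduct_add, add_dotProduct, sub_dotProduct, dotProduct_sub, mulVec_add,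
      mulVec_sub, mulVec_smul, dotProduct_smul, smul_dotProduct, smul_eq_mul]
    ring
  have := mul_nonneg (mul_nonneg ha hb) (hZ (x - y))
  simp only [smul_eq_mul]
  linarith

omit [Fintype m] in
lemma ConvexOn.map_sum_smul_neg {ι : Type*} [Fintype ι] {f : (m → ℝ) → ℝ}
    (hf : ConvexOn ℝ Set.univ f) {w : ι → ℝ} (hw₀ : ∀ i, 0 ≤ w i) (hw₁ : ∑ i, w i = 1)
    {v : ι → m → ℝ} (hv : ∀ i, f (v i) < 0) : f (∑ i, w i • v i) < 0 := by
  obtain ⟨i, -, hi⟩ := hf.exists_ge_of_centerMass (t := Finset.univ) (fun i _ => hw₀ i)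
    (by rw [hw₁]; exact one_pos) (fun i _ => Set.mem_univ (v i))
  rw [Finset.centerMass_eq_of_sum_1 _ _ hw₁] at hi
  exact hi.trans_lt (hv i)

end QuadraticForms

section SchurForms

variable {n : ℕ} (J P Z Q U R : Matrix (Fin n) (Fin n) ℝ) (N : Matrix (Fin n) (Fin n ⊕ Fin n) ℝ)

/-- The Schur complements of `Ψᵢⱼ(T)` and `Φᵢⱼ(T)` (with respect to their `-Zⱼ/T` block),
evaluated at `(p, y)`, are `schurConst + T * psiSlope (Aᵢ *ᵥ p)` and
`schurConst + T * phiSlope (Aᵢ *ᵥ p)`. -/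
def schurConst (p y : Fin n → ℝ) : ℝ :=
  -((p - J *ᵥ y) ⬝ᵥ Q *ᵥ (p - J *ᵥ y)) + ((J *ᵥ y) ⬝ᵥ P *ᵥ (J *ᵥ y) - y ⬝ᵥ P *ᵥ y)
    + 2 * ((N *ᵥ Sum.elim p y) ⬝ᵥ (p - J *ᵥ y)) - 2 * ((p - J *ᵥ y) ⬝ᵥ R *ᵥ p)

def psiSlope (b p y : Fin n → ℝ) : ℝ :=
  2 * (b ⬝ᵥ P *ᵥ p) + 2 * (b ⬝ᵥ Q *ᵥ (p - J *ᵥ y)) + 2 * (b ⬝ᵥ R *ᵥ p)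
    + 2 * ((p - J *ᵥ y) ⬝ᵥ R *ᵥ b) + (J *ᵥ y) ⬝ᵥ U *ᵥ (J *ᵥ y) + b ⬝ᵥ Z *ᵥ b

noncomputable def phiSlope (b p y : Fin n → ℝ) : ℝ :=
  2 * (b ⬝ᵥ P *ᵥ p) - (J *ᵥ y) ⬝ᵥ U *ᵥ (J *ᵥ y)
    + (N *ᵥ Sum.elim p y) ⬝ᵥ Z⁻¹ *ᵥ (N *ᵥ Sum.elim p y)

variable {J P Z Q U R N}

lemma sumElim_dotProduct_G0_mulVec (T : ℝ) (A : Matrix (Fin n) (Fin n) ℝ) (p y : Fin n → ℝ) :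
    Sum.elim p y ⬝ᵥ G0 T A J P Q R N *ᵥ Sum.elim p y
      = schurConst J P Q R N p y + T * (2 * ((A *ᵥ p) ⬝ᵥ P *ᵥ p)) := by
  simp only [G0, schurConst, He, Mxb, Mmb, Mzb, transpose_mul, transpose_transpose,
    add_mulVec, sub_mulVec, smul_mulVec, ← mulVec_mulVec, fromCols_mulVec_sumElim,
    dotProduct_transpose_mulVec, transpose_mulVec_dotProduct, one_mulVec, zero_mulVec,
    neg_mulVec, mulVec_add, mulVec_sub, mulVec_neg, dotProduct_add, dotProduct_sub,
    sub_dotProduct, dotProduct_neg, dotProduct_smul, smul_eq_mul, add_zero, zero_add]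
  ring_nf
  simp only [dotProduct_comm]
  ring_nf

lemma sumElim_dotProduct_G1_mulVec (A : Matrix (Fin n) (Fin n) ℝ) (p y : Fin n → ℝ) :
    Sum.elim p y ⬝ᵥ G1 A J Q R *ᵥ Sum.elim p y
      = 2 * ((A *ᵥ p) ⬝ᵥ Q *ᵥ (p - J *ᵥ y)) + 2 * ((A *ᵥ p) ⬝ᵥ R *ᵥ p)
        + 2 * ((p - J *ᵥ y) ⬝ᵥ R *ᵥ (A *ᵥ p)) := by
  simp only [G1, He, Mxb, Mzb, add_mulVec, ← mulVec_mulVec, fromCols_mulVec_sumElim,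
    dotProduct_transpose_mulVec, transpose_mulVec_dotProduct, one_mulVec, zero_mulVec,
    neg_mulVec, mulVec_add, mulVec_neg, mulVec_sub, dotProduct_add, dotProduct_neg,
    dotProduct_sub, sub_dotProduct, add_zero]
  ring_nf
  simp only [dotProduct_comm]

lemma sumElim_dotProduct_G2_mulVec (p y : Fin n → ℝ) :
    Sum.elim p y ⬝ᵥ G2 J U *ᵥ Sum.elim p y = (J *ᵥ y) ⬝ᵥ U *ᵥ (J *ᵥ y) := by
  simp only [G2, Mmb, ← mulVec_mulVec, dotProduct_transpose_mulVec, fromCols_mulVec_sumElim,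
    zero_mulVec, one_mulVec, zero_add, transpose_mulVec_dotProduct]
  exact dotProduct_comm _ _

variable {T : ℝ} {A : Matrix (Fin n) (Fin n) ℝ} {p y : Fin n → ℝ}

lemma schurConst_add_mul_psiSlope_neg (hT : 0 < T) (hZs : Z.IsSymm) (hZ : posDef Z)
    (h : negDef (PsiR T A J P Z Q U R N)) (hpy : Sum.elim p y ≠ 0) :
    schurConst J P Q R N p y + T * psiSlope J P Z Q U R (A *ᵥ p) p y < 0 := by
  have hB : ((Mxb n)ᵀ * Aᵀ * Z)ᵀ = Z * A * Mxb n := by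
    simp only [transpose_mul, transpose_transpose, hZs.eq, Matrix.mul_assoc]
  rw [PsiR, ← hB] at h
  have hS := schur_complement_neg_of_negDef_fromBlocks hT hZ h hpy
  rw [hB, ← mulVec_mulVec, ← mulVec_mulVec, Mxb, fromCols_mulVec_sumElim, one_mulVec,
    zero_mulVec, add_zero, mulVec_mulVec (M := Z⁻¹), nonsing_inv_mul _ hZ.isUnit_det, one_mulVec,
    dotProduct_comm (Z *ᵥ _), add_mulVec, smul_mulVec, add_mulVec, dotProduct_add, dotProduct_smul,
    dotProduct_add, smul_eq_mul, sumElim_dotProduct_G0_mulVec, sumElim_dotProduct_G1_mulVec,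
    sumElim_dotProduct_G2_mulVec] at hS
  rw [psiSlope]
  linarith

lemma schurConst_add_mul_phiSlope_neg (hT : 0 < T) (hZ : posDef Z)
    (h : negDef (PhiR T A J P Z Q U R N)) (hpy : Sum.elim p y ≠ 0) :
    schurConst J P Q R N p y + T * phiSlope J P Z U N (A *ᵥ p) p y < 0 := by
  have hΦ : negDef (fromBlocks (G0 T A J P Q R N - T • G2 J U) Nᵀ Nᵀᵀ (-(T⁻¹ • Z))) := by
    rw [transpose_transpose]
    exact h
  have hS := schur_complement_neg_of_negDef_fromBlocks hT hZ hΦ hpy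
  rw [transpose_transpose, sub_mulVec, smul_mulVec, dotProduct_sub, dotProduct_smul,
    smul_eq_mul, sumElim_dotProduct_G0_mulVec, sumElim_dotProduct_G2_mulVec] at hS
  rw [phiSlope]
  linarith

end SchurForms

section Convexity

variable {n : ℕ} {J P Z Q U R : Matrix (Fin n) (Fin n) ℝ} {N : Matrix (Fin n) (Fin n ⊕ Fin n) ℝ}
  {T : ℝ} {p y : Fin n → ℝ} {ι : Type*} [Fintype ι] {A : ι → Matrix (Fin n) (Fin n) ℝ}
  {w : ι → ℝ}

lemma convexOn_schurConst_add_mul_psiSlope (hT : 0 ≤ T) (hZ : posSemidef Z) :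
    ConvexOn ℝ Set.univ fun b => schurConst J P Q R N p y + T * psiSlope J P Z Q U R b p y := by
  have h := convexOn_quadratic (hZ.smul hT)
    (schurConst J P Q R N p y + T * ((J *ᵥ y) ⬝ᵥ U *ᵥ (J *ᵥ y)))
    ((2 * T) • (P *ᵥ p + Q *ᵥ (p - J *ᵥ y) + R *ᵥ p + Rᵀ *ᵥ (p - J *ᵥ y)))
  convert h using 2 with b
  simp only [psiSlope, smul_dotProduct, add_dotProduct, transpose_mulVec_dotProduct, smul_mulVec,
    smul_eq_mul, dotProduct_comm b]
  ring

lemma convexOn_schurConst_add_mul_phiSlope :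
    ConvexOn ℝ Set.univ fun b => schurConst J P Q R N p y + T * phiSlope J P Z U N b p y := by
  have h := convexOn_quadratic (fun _ => by simp : posSemidef (0 : Matrix (Fin n) (Fin n) ℝ))
    (schurConst J P Q R N p y + T * (phiSlope J P Z U N 0 p y)) ((2 * T) • (P *ᵥ p))
  convert h using 2 with b
  simp only [phiSlope, smul_dotProduct, zero_mulVec, zero_dotProduct,
    smul_eq_mul, dotProduct_comm b]
  ring

lemma schurConst_add_mul_psiSlope_sum_smul_neg (hT : 0 < T) (hZs : Z.IsSymm) (hZ : posDef Z)
    (hΨ : ∀ i, negDef (PsiR T (A i) J P Z Q U R N)) (hw₀ : ∀ i, 0 ≤ w i) (hw₁ : ∑ i, w i = 1)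
    (hpy : Sum.elim p y ≠ 0) :
    schurConst J P Q R N p y + T * psiSlope J P Z Q U R ((∑ i, w i • A i) *ᵥ p) p y < 0 := by
  simp only [sum_mulVec, smul_mulVec]
  exact (convexOn_schurConst_add_mul_psiSlope hT.le hZ.posSemidef).map_sum_smul_neg hw₀ hw₁
    fun i => schurConst_add_mul_psiSlope_neg hT hZs hZ (hΨ i) hpy

lemma schurConst_add_mul_phiSlope_sum_smul_neg (hT : 0 < T) (hZ : posDef Z)
    (hΦ : ∀ i, negDef (PhiR T (A i) J P Z Q U R N)) (hw₀ : ∀ i, 0 ≤ w i) (hw₁ : ∑ i, w i = 1)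
    (hpy : Sum.elim p y ≠ 0) :
    schurConst J P Q R N p y + T * phiSlope J P Z U N ((∑ i, w i • A i) *ᵥ p) p y < 0 := by
  simp only [sum_mulVec, smul_mulVec]
  exact convexOn_schurConst_add_mul_phiSlope.map_sum_smul_neg hw₀ hw₁
    fun i => schurConst_add_mul_phiSlope_neg hT hZ (hΦ i) hpy

end Convexity

lemma add_mul_neg_of_mem_Icc {c r a b θ : ℝ} (hθ : θ ∈ Set.Icc a b) (ha : c + a * r < 0)
    (hb : c + b * r < 0) : c + θ * r < 0 := by
  rcases le_total 0 r with h | h <;> nlinarith [hθ.1, hθ.2]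

section Calculus

variable {m : Type*} [Fintype m] {u w : ℝ → m → ℝ} {u' w' : m → ℝ} {t : ℝ}

lemma HasDerivAt.dotProduct (hu : HasDerivAt u u' t) (hw : HasDerivAt w w' t) :
    HasDerivAt (fun s => u s ⬝ᵥ w s) (u' ⬝ᵥ w t + u t ⬝ᵥ w') t := by
  unfold _root_.dotProduct
  rw [← Finset.sum_add_distrib]
  exact HasDerivAt.fun_sum fun i _ =>
    (hasDerivAt_pi.1 hu i).fun_mul (hasDerivAt_pi.1 hw i)

lemma HasDerivAt.mulVec (M : Matrix m m ℝ) (hw : HasDerivAt w w' t) :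
    HasDerivAt (fun s => M *ᵥ w s) (M *ᵥ w') t :=
  (M.mulVecLin.toContinuousLinearMap).hasFDerivAt.comp_hasDerivAt t hw

lemma HasDerivAt.dotProduct_mulVec_s18 (M : Matrix m m ℝ) (hu : HasDerivAt u u' t)
    (hw : HasDerivAt w w' t) :
    HasDerivAt (fun s => u s ⬝ᵥ M *ᵥ w s) (u' ⬝ᵥ M *ᵥ w t + u t ⬝ᵥ M *ᵥ w') t :=
  hu.dotProduct (hw.mulVec M)

/-- `I s - I 0` stands for `∫₀ˢ χ'ᵀZχ'`; the bound integrates `(χ' + Z⁻¹a)ᵀZ(χ' + Z⁻¹a) ≥ 0`. -/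
lemma sub_le_of_hasDerivAt_quad [DecidableEq m] {Z : Matrix m m ℝ} (hZs : Z.IsSymm)
    (hZ : posDef Z) {χ χ' : ℝ → m → ℝ} {I : ℝ → ℝ} (hχ : ∀ s, HasDerivAt χ (χ' s) s)
    (hI : ∀ s, HasDerivAt I (χ' s ⬝ᵥ Z *ᵥ χ' s) s) (a : m → ℝ) {s : ℝ} (hs : 0 ≤ s) :
    I 0 - I s ≤ 2 * (a ⬝ᵥ (χ s - χ 0)) + s * (a ⬝ᵥ Z⁻¹ *ᵥ a) := by
  have hsq : ∀ v, (v + Z⁻¹ *ᵥ a) ⬝ᵥ Z *ᵥ (v + Z⁻¹ *ᵥ a)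
      = v ⬝ᵥ Z *ᵥ v + 2 * (a ⬝ᵥ v) + a ⬝ᵥ Z⁻¹ *ᵥ a := fun v => by
    rw [add_dotProduct, mulVec_add, dotProduct_add, dotProduct_add, hZ.mulVec_inv_mulVec,
      hZs.dotProduct_mulVec_comm_s18 (Z⁻¹ *ᵥ a), hZ.mulVec_inv_mulVec, dotProduct_comm v a,
      dotProduct_comm (Z⁻¹ *ᵥ a)]
    ring
  have hmono : Monotone fun t => I t + 2 * (a ⬝ᵥ χ t) + t * (a ⬝ᵥ Z⁻¹ *ᵥ a) := by
    refine monotone_of_hasDerivAt_nonneg (fun t => (((hI t).fun_add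
      (((hasDerivAt_const t a).dotProduct (hχ t)).const_mul 2)).fun_add
      ((hasDerivAt_id t).mul_const _))) fun t => ?_
    simp only [zero_dotProduct, zero_add, one_mul, ← hsq]
    exact hZ.posSemidef _
  have := hmono hs
  simp only [dotProduct_sub] at this ⊢
  linarith

end Calculus

section MatrixExp

attribute [local instance] Matrix.linftyOpNormedRing Matrix.linftyOpNormedAlgebra

lemma hasDerivAt_mexp_smul_mulVec {n : ℕ} (A : Matrix (Fin n) (Fin n) ℝ) (c : Fin n → ℝ)
    (t : ℝ) : HasDerivAt (fun s => mexp (s • A) *ᵥ c) (A *ᵥ (mexp (t • A) *ᵥ c)) t := by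
  rw [mulVec_mulVec]
  exact ((Matrix.mulVecBilin ℝ ℝ).flip c).toContinuousLinearMap.hasFDerivAt.comp_hasDerivAt t
    (hasDerivAt_exp_smul_const' A t)

lemma continuous_mexp_smul_mul {n : ℕ} (A J : Matrix (Fin n) (Fin n) ℝ) :
    Continuous fun θ : ℝ => mexp (θ • A) * J :=
  (NormedSpace.exp_continuous.comp (continuous_id.smul continuous_const)).mul continuous_const

end MatrixExp

section LoopedFunctional

variable {n : ℕ} {J P Z Q U R : Matrix (Fin n) (Fin n) ℝ} {N : Matrix (Fin n) (Fin n ⊕ Fin n) ℝ}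
  {T : ℝ} {A : Matrix (Fin n) (Fin n) ℝ} {y : Fin n → ℝ} {χ : ℝ → Fin n → ℝ} {I : ℝ → ℝ}

/-- The looped functional along the flow `χ` started at `χ 0 = J *ᵥ y`, where `I` is an
antiderivative of `s ↦ χ'(s)ᵀ Z χ'(s)`. -/
def loopedFunctional (T : ℝ) (J P Q U R : Matrix (Fin n) (Fin n) ℝ) (y : Fin n → ℝ)
    (χ : ℝ → Fin n → ℝ) (I : ℝ → ℝ) (s : ℝ) : ℝ :=
  T * (χ s ⬝ᵥ P *ᵥ χ s)
    + (T - s) * ((χ s - J *ᵥ y) ⬝ᵥ Q *ᵥ (χ s - J *ᵥ y) + 2 * ((χ s - J *ᵥ y) ⬝ᵥ R *ᵥ χ s)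
      + (I s - I 0))
    + s * (T - s) * ((J *ᵥ y) ⬝ᵥ U *ᵥ (J *ᵥ y)) + s * ((J *ᵥ y) ⬝ᵥ P *ᵥ (J *ᵥ y) - y ⬝ᵥ P *ᵥ y)

/-- All terms involving the free matrix `N` cancel between the two Schur forms and the slack. -/
lemma hasDerivAt_loopedFunctional (hT : T ≠ 0) (hP : P.IsSymm) (hQ : Q.IsSymm)
    (hχ : ∀ s, HasDerivAt χ (A *ᵥ χ s) s)
    (hI : ∀ s, HasDerivAt I ((A *ᵥ χ s) ⬝ᵥ Z *ᵥ (A *ᵥ χ s)) s) (s : ℝ) :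
    HasDerivAt (loopedFunctional T J P Q U R y χ I)
      (((T - s) * (schurConst J P Q R N (χ s) y + T * psiSlope J P Z Q U R (A *ᵥ χ s) (χ s) y)
        + s * (schurConst J P Q R N (χ s) y + T * phiSlope J P Z U N (A *ᵥ χ s) (χ s) y)
        - T * (I s - I 0 + 2 * ((N *ᵥ Sum.elim (χ s) y) ⬝ᵥ (χ s - J *ᵥ y))
          + s * ((N *ᵥ Sum.elim (χ s) y) ⬝ᵥ Z⁻¹ *ᵥ (N *ᵥ Sum.elim (χ s) y)))) / T) s := by
  have hζ : HasDerivAt (fun t => χ t - J *ᵥ y) (A *ᵥ χ s) s := (hχ s).sub_const _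
  have hT_s : HasDerivAt (fun t : ℝ => T - t) (-1) s := by
    simpa using (hasDerivAt_id s).const_sub T
  have h := ((((hχ s).dotProduct_mulVec_s18 P (hχ s)).const_mul T).fun_add
    (hT_s.fun_mul ((hζ.dotProduct_mulVec_s18 Q hζ).fun_add
      ((hζ.dotProduct_mulVec_s18 R (hχ s)).const_mul 2) |>.fun_add ((hI s).sub_const (I 0))))
    |>.fun_add (((hasDerivAt_id s).fun_mul hT_s).mul_const ((J *ᵥ y) ⬝ᵥ U *ᵥ (J *ᵥ y)))
    |>.fun_add ((hasDerivAt_id s).mul_const ((J *ᵥ y) ⬝ᵥ P *ᵥ (J *ᵥ y) - y ⬝ᵥ P *ᵥ y)))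
  refine h.congr_deriv ?_
  rw [hP.dotProduct_mulVec_comm_s18 (χ s) (A *ᵥ χ s),
    hQ.dotProduct_mulVec_comm_s18 (χ s - J *ᵥ y) (A *ᵥ χ s)]
  simp only [schurConst, psiSlope, phiSlope, id]
  field_simp
  ring

lemma flow_quad_lt_of_schur_neg (hT : 0 < T) (hP : P.IsSymm) (hQ : Q.IsSymm)
    (hZs : Z.IsSymm) (hZ : posDef Z) (hχ : ∀ s, HasDerivAt χ (A *ᵥ χ s) s)
    (hχ0 : χ 0 = J *ᵥ y)
    (hψ : ∀ p, schurConst J P Q R N p y + T * psiSlope J P Z Q U R (A *ᵥ p) p y < 0)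
    (hφ : ∀ p, schurConst J P Q R N p y + T * phiSlope J P Z U N (A *ᵥ p) p y < 0) :
    χ T ⬝ᵥ P *ᵥ χ T < y ⬝ᵥ P *ᵥ y := by
  have hq : Continuous fun s => (A *ᵥ χ s) ⬝ᵥ Z *ᵥ (A *ᵥ χ s) := by
    have hAχ : Continuous fun s => A *ᵥ χ s := continuous_const.matrix_mulVec
      (continuous_iff_continuousAt.2 fun s => (hχ s).continuousAt)
    exact hAχ.dotProduct (continuous_const.matrix_mulVec hAχ)
  set I := fun s => ∫ θ in (0 : ℝ)..s, (A *ᵥ χ θ) ⬝ᵥ Z *ᵥ (A *ᵥ χ θ)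
  have hI (s : ℝ) : HasDerivAt I ((A *ᵥ χ s) ⬝ᵥ Z *ᵥ (A *ᵥ χ s)) s :=
    intervalIntegral.integral_hasDerivAt_right (hq.intervalIntegrable _ _)
      (hq.stronglyMeasurableAtFilter _ _) hq.continuousAt
  have hF := hasDerivAt_loopedFunctional (J := J) (U := U) (R := R) (N := N) (y := y) hT.ne' hP hQ
    hχ hI
  obtain ⟨c, hc, hslope⟩ := exists_hasDerivAt_eq_slope _ _ hT
    (fun s _ => (hF s).continuousAt.continuousWithinAt) fun s _ => hF s
  have hslack := sub_le_of_hasDerivAt_quad hZs hZ hχ hI (N *ᵥ Sum.elim (χ c) y) hc.1.le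
  have hψc := mul_neg_of_pos_of_neg (sub_pos.2 hc.2) (hψ (χ c))
  have hφc := mul_neg_of_pos_of_neg hc.1 (hφ (χ c))
  have hFT : loopedFunctional T J P Q U R y χ I T - loopedFunctional T J P Q U R y χ I 0
      = T * (χ T ⬝ᵥ P *ᵥ χ T - y ⬝ᵥ P *ᵥ y) := by
    simp only [loopedFunctional, hχ0, sub_self, zero_dotProduct]
    ring
  rw [hFT, sub_zero, mul_div_cancel_left₀ _ hT.ne'] at hslope
  rw [hχ0] at hslack
  rw [← sub_neg, ← hslope]
  exact div_neg_of_neg_of_pos (by nlinarith) hT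

end LoopedFunctional

section ImpulsiveMap

variable {n : ℕ}

lemma dotProduct_transpose_mul_mul_mulVec {m k : Type*} [Fintype m] [Fintype k]
    (B : Matrix m k ℝ) (P : Matrix m m ℝ) (v : k → ℝ) :
    v ⬝ᵥ (Bᵀ * P * B) *ᵥ v = (B *ᵥ v) ⬝ᵥ P *ᵥ (B *ᵥ v) := by
  rw [← mulVec_mulVec, ← mulVec_mulVec, dotProduct_transpose_mulVec, dotProduct_comm]

lemma dotProduct_scrI_mulVec (P A J : Matrix (Fin n) (Fin n) ℝ) (T : ℝ) (v : Fin n → ℝ) :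
    v ⬝ᵥ scrI P A J T *ᵥ v
      = ((mexp (T • A) * J) *ᵥ v) ⬝ᵥ P *ᵥ ((mexp (T • A) * J) *ᵥ v) - v ⬝ᵥ P *ᵥ v := by
  have h : scrI P A J T = (mexp (T • A) * J)ᵀ * P * (mexp (T • A) * J) - P := by
    rw [scrI, mexp, ← transpose_smul, Matrix.exp_transpose, transpose_mul, ← mexp]
    simp only [Matrix.mul_assoc]
  rw [h, sub_mulVec, dotProduct_sub, dotProduct_transpose_mul_mul_mulVec]

lemma negDef_scrI_of_schur_neg {A J P Z Q U R : Matrix (Fin n) (Fin n) ℝ}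
    {N : Matrix (Fin n) (Fin n ⊕ Fin n) ℝ} {T : ℝ} (hT : 0 < T) (hP : P.IsSymm)
    (hQ : Q.IsSymm) (hZs : Z.IsSymm) (hZ : posDef Z)
    (hψ : ∀ p y, y ≠ 0 → schurConst J P Q R N p y + T * psiSlope J P Z Q U R (A *ᵥ p) p y < 0)
    (hφ : ∀ p y, y ≠ 0 → schurConst J P Q R N p y + T * phiSlope J P Z U N (A *ᵥ p) p y < 0) :
    negDef (scrI P A J T) := by
  intro y hy
  rw [dotProduct_scrI_mulVec, sub_neg, ← mulVec_mulVec]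
  exact flow_quad_lt_of_schur_neg hT hP hQ hZs hZ
    (hasDerivAt_mexp_smul_mulVec A (J *ᵥ y)) (by simp [mexp]) (fun p => hψ p y hy)
    (fun p => hφ p y hy)

lemma negDef_scrI_sum_smul {ι : Type*} [Fintype ι] {P A : Matrix (Fin n) (Fin n) ℝ}
    (hP : posSemidef P) {T : ℝ} {J : ι → Matrix (Fin n) (Fin n) ℝ}
    (hJ : ∀ j, negDef (scrI P A (J j) T)) {μ : ι → ℝ} (hμ₀ : ∀ j, 0 ≤ μ j)
    (hμ₁ : ∑ j, μ j = 1) : negDef (scrI P A (∑ j, μ j • J j) T) := by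
  intro v hv
  have hsum : (mexp (T • A) * ∑ j, μ j • J j) *ᵥ v = ∑ j, μ j • ((mexp (T • A) * J j) *ᵥ v) := by
    simp only [Finset.mul_sum, mul_smul_comm, sum_mulVec, smul_mulVec]
  have hf := convexOn_quadratic hP (-(v ⬝ᵥ P *ᵥ v)) 0
  have := hf.map_sum_smul_neg hμ₀ hμ₁ (v := fun j => (mexp (T • A) * J j) *ᵥ v) fun j => by
    simpa [dotProduct_scrI_mulVec, neg_add_eq_sub] using hJ j v hv
  simpa [dotProduct_scrI_mulVec, hsum, neg_add_eq_sub] using this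

end ImpulsiveMap

section Stability

variable {n : ℕ} {P : Matrix (Fin n) (Fin n) ℝ}

lemma IsCompact.exists_lt_forall_le_of_forall_lt {X : Type*} [TopologicalSpace X] {K : Set X}
    (hK : IsCompact K) {f : X → ℝ} (hf : ContinuousOn f K) {c : ℝ} (h : ∀ x ∈ K, f x < c) :
    ∃ c' < c, ∀ x ∈ K, f x ≤ c' := by
  rcases K.eq_empty_or_nonempty with rfl | hK₀
  · exact ⟨c - 1, by linarith, by simp⟩
  · obtain ⟨x, hx, hmax⟩ := hK.exists_isMaxOn hK₀ hf
    exact ⟨f x, h x hx, fun y hy => hmax hy⟩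

lemma exists_mem_unitSphere_eq_norm_smul {v : Fin n → ℝ} (hv : v ≠ 0) :
    ∃ u ∈ Metric.sphere (0 : Fin n → ℝ) 1, v = ‖v‖ • u := by
  refine ⟨‖v‖⁻¹ • v, ?_, ?_⟩
  · rw [mem_sphere_zero_iff_norm]
    exact norm_smul_inv_norm (𝕜 := ℝ) hv
  · rw [smul_smul, mul_inv_cancel₀ (norm_ne_zero_iff.2 hv), one_smul]

lemma continuous_dotProduct_mulVec (M : Matrix (Fin n) (Fin n) ℝ) :
    Continuous fun v : Fin n → ℝ => v ⬝ᵥ M *ᵥ v :=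
  continuous_id.dotProduct (continuous_const.matrix_mulVec continuous_id)

lemma posDef.exists_pos_mul_norm_sq_le (hP : posDef P) :
    ∃ m > 0, ∀ v, m * ‖v‖ ^ 2 ≤ v ⬝ᵥ P *ᵥ v := by
  obtain ⟨c, hc, hle⟩ := (isCompact_sphere (0 : Fin n → ℝ) 1).exists_lt_forall_le_of_forall_lt
    (f := fun v => -(v ⬝ᵥ P *ᵥ v)) (continuous_dotProduct_mulVec P).neg.continuousOn fun v hv =>
      neg_neg_of_pos (hP v (ne_zero_of_mem_unit_sphere ⟨v, hv⟩))
  refine ⟨-c, neg_pos.2 hc, fun v => ?_⟩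
  rcases eq_or_ne v 0 with rfl | hv
  · simp
  · obtain ⟨u, hu, hvu⟩ := exists_mem_unitSphere_eq_norm_smul hv
    have hPu : -c ≤ u ⬝ᵥ P *ᵥ u := by linarith [hle u hu]
    calc -c * ‖v‖ ^ 2 ≤ ‖v‖ ^ 2 * (u ⬝ᵥ P *ᵥ u) := by nlinarith [sq_nonneg ‖v‖]
      _ = v ⬝ᵥ P *ᵥ v := by rw [hvu, dotProduct_smul_mulVec_smul, norm_smul, norm_norm,
          mem_sphere_zero_iff_norm.1 hu, mul_one]

/-- The ratio `(Bv)ᵀP(Bv) / vᵀPv` attains its maximum on the compact set `S × sphere`. -/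
lemma exists_lt_one_forall_quad_le (hP : posDef P) {X : Type*} [TopologicalSpace X]
    {S : Set X} (hS : IsCompact S) {B : X → Matrix (Fin n) (Fin n) ℝ} (hB : Continuous B)
    (h : ∀ s ∈ S, ∀ v ≠ 0, (B s *ᵥ v) ⬝ᵥ P *ᵥ (B s *ᵥ v) < v ⬝ᵥ P *ᵥ v) :
    ∃ ρ < 1, ∀ s ∈ S, ∀ v, (B s *ᵥ v) ⬝ᵥ P *ᵥ (B s *ᵥ v) ≤ ρ * (v ⬝ᵥ P *ᵥ v) := by
  have hpos : ∀ z ∈ S ×ˢ Metric.sphere (0 : Fin n → ℝ) 1, 0 < z.2 ⬝ᵥ P *ᵥ z.2 :=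
    fun z hz => hP _ (ne_zero_of_mem_unit_sphere ⟨_, hz.2⟩)
  have hBv : Continuous fun z : X × (Fin n → ℝ) => B z.1 *ᵥ z.2 :=
    (hB.comp continuous_fst).matrix_mulVec continuous_snd
  obtain ⟨ρ, hρ, hle⟩ := (hS.prod (isCompact_sphere 0 1)).exists_lt_forall_le_of_forall_lt
    (f := fun z => (B z.1 *ᵥ z.2) ⬝ᵥ P *ᵥ (B z.1 *ᵥ z.2) / (z.2 ⬝ᵥ P *ᵥ z.2))
    ((hBv.dotProduct (continuous_const.matrix_mulVec hBv)).continuousOn.div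
      ((continuous_dotProduct_mulVec P).comp continuous_snd).continuousOn
      fun z hz => (hpos z hz).ne')
    fun z hz => (div_lt_one (hpos z hz)).2 (h _ hz.1 _ (ne_zero_of_mem_unit_sphere ⟨_, hz.2⟩))
  refine ⟨ρ, hρ, fun s hs v => ?_⟩
  rcases eq_or_ne v 0 with rfl | hv
  · simp
  · obtain ⟨u, hu, hvu⟩ := exists_mem_unitSphere_eq_norm_smul hv
    have hz : (s, u) ∈ S ×ˢ Metric.sphere (0 : Fin n → ℝ) 1 := ⟨hs, hu⟩
    have hBu := (div_le_iff₀ (hpos _ hz)).1 (hle _ hz)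
    rw [hvu, mulVec_smul, dotProduct_smul_mulVec_smul, dotProduct_smul_mulVec_smul]
    nlinarith [sq_nonneg ‖v‖]

lemma tendsto_zero_of_quad_le_mul (hP : posDef P) {ρ : ℝ} (hρ : ρ < 1) {x : ℕ → Fin n → ℝ}
    (hx : ∀ k, x (k + 1) ⬝ᵥ P *ᵥ x (k + 1) ≤ ρ * (x k ⬝ᵥ P *ᵥ x k)) :
    Tendsto x atTop (nhds 0) := by
  obtain ⟨m, hm, hmP⟩ := hP.exists_pos_mul_norm_sq_le
  set r := max ρ 0
  have hV (k : ℕ) : x k ⬝ᵥ P *ᵥ x k ≤ r ^ k * (x 0 ⬝ᵥ P *ᵥ x 0) := by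
    induction k with
    | zero => simp
    | succ k ih =>
      calc x (k + 1) ⬝ᵥ P *ᵥ x (k + 1) ≤ r * (x k ⬝ᵥ P *ᵥ x k) :=
            (hx k).trans (mul_le_mul_of_nonneg_right (le_max_left _ _) (hP.posSemidef _))
        _ ≤ r * (r ^ k * (x 0 ⬝ᵥ P *ᵥ x 0)) := mul_le_mul_of_nonneg_left ih (le_max_right _ _)
        _ = r ^ (k + 1) * (x 0 ⬝ᵥ P *ᵥ x 0) := by ring
  have hr : Tendsto (fun k => √(r ^ k * (x 0 ⬝ᵥ P *ᵥ x 0) / m)) atTop (nhds 0) := by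
    simpa using (((tendsto_pow_atTop_nhds_zero_of_lt_one (le_max_right _ _)
      (max_lt hρ one_pos)).mul_const _).div_const m).sqrt
  refine squeeze_zero_norm (fun k => Real.le_sqrt_of_sq_le ?_) hr
  rw [le_div_iff₀ hm]
  nlinarith [hmP (x k), hV k]

end Stability

lemma tendsto_zero_of_negDef_scrI {n : ℕ} {P A J : Matrix (Fin n) (Fin n) ℝ} (hP : posDef P)
    {Tmin Tmax : ℝ} (h : ∀ θ ∈ Set.Icc Tmin Tmax, negDef (scrI P A J θ)) {Tk : ℕ → ℝ}
    (hTk : ∀ k, Tk k ∈ Set.Icc Tmin Tmax) {x : ℕ → Fin n → ℝ}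
    (hx : ∀ k, x (k + 1) = (mexp (Tk k • A) * J) *ᵥ x k) : Tendsto x atTop (nhds 0) := by
  obtain ⟨ρ, hρ, hle⟩ := exists_lt_one_forall_quad_le hP isCompact_Icc
    (continuous_mexp_smul_mul A J) fun θ hθ v hv => by
      simpa [dotProduct_scrI_mulVec] using h θ hθ v hv
  exact tendsto_zero_of_quad_le_mul hP hρ fun k => hx k ▸ hle _ (hTk k) _

lemma negDef_scrI_of_vertices {n NA NJ : ℕ} {Tmin Tmax : ℝ} (hTmin : 0 < Tmin)
    {A : Fin NA → Matrix (Fin n) (Fin n) ℝ} {J : Fin NJ → Matrix (Fin n) (Fin n) ℝ}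
    {P : Matrix (Fin n) (Fin n) ℝ} (hPs : P.IsSymm) (hP : posDef P)
    {Z Q U R : Fin NJ → Matrix (Fin n) (Fin n) ℝ} {N : Fin NJ → Matrix (Fin n) (Fin n ⊕ Fin n) ℝ}
    (hZs : ∀ j, (Z j).IsSymm) (hZ : ∀ j, posDef (Z j)) (hQs : ∀ j, (Q j).IsSymm)
    (hΨ : ∀ T ∈ ({Tmin, Tmax} : Set ℝ), ∀ i j,
      negDef (PsiR T (A i) (J j) P (Z j) (Q j) (U j) (R j) (N j)))
    (hΦ : ∀ T ∈ ({Tmin, Tmax} : Set ℝ), ∀ i j,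
      negDef (PhiR T (A i) (J j) P (Z j) (Q j) (U j) (R j) (N j)))
    {α : Fin NA → ℝ} (hα₀ : ∀ i, 0 ≤ α i) (hα₁ : ∑ i, α i = 1)
    {β : Fin NJ → ℝ} (hβ₀ : ∀ j, 0 ≤ β j) (hβ₁ : ∑ j, β j = 1)
    {θ : ℝ} (hθ : θ ∈ Set.Icc Tmin Tmax) :
    negDef (scrI P (∑ i, α i • A i) (∑ j, β j • J j) θ) := by
  have hTmax : 0 < Tmax := hTmin.trans_le (hθ.1.trans hθ.2)
  refine negDef_scrI_sum_smul hP.posSemidef (fun j => ?_) hβ₀ hβ₁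
  refine negDef_scrI_of_schur_neg (U := U j) (R := R j) (N := N j)
    (hTmin.trans_le hθ.1) hPs (hQs j) (hZs j) (hZ j) (fun p y hy => ?_) (fun p y hy => ?_)
  all_goals have hpy : Sum.elim p y ≠ 0 := fun h0 => hy (funext fun i => congrFun h0 (Sum.inr i))
  · exact add_mul_neg_of_mem_Icc hθ
      (schurConst_add_mul_psiSlope_sum_smul_neg hTmin (hZs j) (hZ j)
        (hΨ Tmin (by simp) · j) hα₀ hα₁ hpy)
      (schurConst_add_mul_psiSlope_sum_smul_neg hTmax (hZs j) (hZ j)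
        (hΨ Tmax (by simp) · j) hα₀ hα₁ hpy)
  · exact add_mul_neg_of_mem_Icc hθ
      (schurConst_add_mul_phiSlope_sum_smul_neg hTmin (hZ j) (hΦ Tmin (by simp) · j) hα₀ hα₁ hpy)
      (schurConst_add_mul_phiSlope_sum_smul_neg hTmax (hZ j) (hΦ Tmax (by simp) · j) hα₀ hα₁ hpy)

theorem stmt18_general {n NA NJ : ℕ} (Tmin Tmax : ℝ) (h1 : 0 < Tmin)
    (A : Fin NA → Matrix (Fin n) (Fin n) ℝ) (Jm : Fin NJ → Matrix (Fin n) (Fin n) ℝ)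
    (P : Matrix (Fin n) (Fin n) ℝ) (hPsym : P.IsSymm) (hP : posDef P)
    (Z Q U R : Fin NJ → Matrix (Fin n) (Fin n) ℝ)
    (N : Fin NJ → Matrix (Fin n) (Fin n ⊕ Fin n) ℝ)
    (hZsym : ∀ j, (Z j).IsSymm) (hZ : ∀ j, posDef (Z j))
    (hQsym : ∀ j, (Q j).IsSymm)
    (hPsi : ∀ T ∈ ({Tmin, Tmax} : Set ℝ), ∀ i j,
      negDef (PsiR T (A i) (Jm j) P (Z j) (Q j) (U j) (R j) (N j)))
    (hPhi : ∀ T ∈ ({Tmin, Tmax} : Set ℝ), ∀ i j,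
      negDef (PhiR T (A i) (Jm j) P (Z j) (Q j) (U j) (R j) (N j))) :
    ∀ (la : Fin NA → ℝ) (mu : Fin NJ → ℝ),
      (∀ i, 0 ≤ la i) → ∑ i, la i = 1 → (∀ j, 0 ≤ mu j) → ∑ j, mu j = 1 →
      (∀ θ ∈ Set.Icc Tmin Tmax,
        negDef (scrI P (∑ i, la i • A i) (∑ j, mu j • Jm j) θ)) ∧
      (∀ Tk : ℕ → ℝ, (∀ k, Tk k ∈ Set.Icc Tmin Tmax) →
        ∀ x₀ : Fin n → ℝ, ∀ x : ℕ → Fin n → ℝ, x 0 = x₀ →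
          (∀ k, x (k + 1) =
            (mexp (Tk k • (∑ i, la i • A i)) * (∑ j, mu j • Jm j)).mulVec (x k)) →
          Tendsto x atTop (nhds 0)) := by
  intro la mu hla hlas hmu hmus
  have hneg := fun θ (hθ : θ ∈ Set.Icc Tmin Tmax) => negDef_scrI_of_vertices h1 hPsym hP hZsym
    hZ hQsym hPsi hPhi hla hlas hmu hmus hθ
  exact ⟨hneg, fun Tk hTk _ _ _ hx => tendsto_zero_of_negDef_scrI hP hneg hTk hx⟩

/-- Robust ranged dwell-time: if `Ψᵢⱼ(T) ≺ 0` and `Φᵢⱼ(T) ≺ 0` for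
`T ∈ {T_min, T_max}` and all vertices, then `ℐ(P,A,J,θ) ≺ 0` for all `θ ∈ [T_min, T_max]`,
`A ∈ co{Aᵢ}`, `J ∈ co{Jⱼ}`; consequently every impulsive trajectory with dwell-times in
`[T_min, T_max]` tends to `0`. -/
theorem stmt18 {n NA NJ : ℕ} (Tmin Tmax : ℝ) (h1 : 0 < Tmin) (h2 : Tmin ≤ Tmax)
    (A : Fin NA → Matrix (Fin n) (Fin n) ℝ) (Jm : Fin NJ → Matrix (Fin n) (Fin n) ℝ)
    (P : Matrix (Fin n) (Fin n) ℝ) (hPsym : P.IsSymm) (hP : posDef P)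
    (Z Q U R : Fin NJ → Matrix (Fin n) (Fin n) ℝ)
    (N : Fin NJ → Matrix (Fin n) (Fin n ⊕ Fin n) ℝ)
    (hZsym : ∀ j, (Z j).IsSymm) (hZ : ∀ j, posDef (Z j))
    (hQsym : ∀ j, (Q j).IsSymm) (hUsym : ∀ j, (U j).IsSymm)
    (hPsi : ∀ T ∈ ({Tmin, Tmax} : Set ℝ), ∀ i j,
      negDef (PsiR T (A i) (Jm j) P (Z j) (Q j) (U j) (R j) (N j)))
    (hPhi : ∀ T ∈ ({Tmin, Tmax} : Set ℝ), ∀ i j,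
      negDef (PhiR T (A i) (Jm j) P (Z j) (Q j) (U j) (R j) (N j))) :
    ∀ (la : Fin NA → ℝ) (mu : Fin NJ → ℝ),
      (∀ i, 0 ≤ la i) → ∑ i, la i = 1 → (∀ j, 0 ≤ mu j) → ∑ j, mu j = 1 →
      (∀ θ ∈ Set.Icc Tmin Tmax,
        negDef (scrI P (∑ i, la i • A i) (∑ j, mu j • Jm j) θ)) ∧
      (∀ Tk : ℕ → ℝ, (∀ k, Tk k ∈ Set.Icc Tmin Tmax) →
        ∀ x₀ : Fin n → ℝ, ∀ x : ℕ → Fin n → ℝ, x 0 = x₀ →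
          (∀ k, x (k + 1) =
            (mexp (Tk k • (∑ i, la i • A i)) * (∑ j, mu j • Jm j)).mulVec (x k)) →
          Tendsto x atTop (nhds 0)) :=
  stmt18_general Tmin Tmax h1 A Jm P hPsym hP Z Q U R N hZsym hZ hQsym hPsi hPhi
end
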